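/- arXiv:2012.11051 — 5 statements merged into one kernel-verified Lean document; each statement's English description precedes it below -/
import Mathlib

section
/- Let A and B be unital prime complex *-algebras whose centers equal ℂ·1 and which each contain a nontrivial projection, and let Φ : A → B be a bijective mapping satisfying Φ(xy − yx*) = Φ(x)Φ(y) − Φ(y)Φ(x)* for all x, y ∈ A. Then Φ(ℝ·1_A) = ℝ·1_B, the map Φ preserves self-adjoint elements in both directions (for a ∈ A, a = a* if and only if Φ(a) = Φ(a)*), and Φ(ℂ·1_A) = ℂ·1_B. -/
/-!
Over a *-algebra with center `ℂ·1`, the real scalars are exactly the `a` with `a y - y a* = 0`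
for all `y`, and the complex scalars are exactly the `a` commuting with every self-adjoint `y`,
i.e. with `y a - a y* = 0` (write `x = ℜ x + i ℑ x`). Both conditions are phrased through the
skew Lie product `x y - y x*`, and a bijection preserving it maps `0` to `0`, so it transports
them. For self-adjointness, `Φ (x e - e x*) = Φ x - (Φ x)*` with `e = Φ⁻¹ 1`, a real scalar
by the first part.
-/

open Function ComplexStarModule

section StarRing

variable {R : Type*} [Ring R] [StarRing R]

theorem forall_mul_sub_mul_star_eq_zero_iff {a : R} :
    (∀ y, a * y - y * star a = 0) ↔ star a = a ∧ ∀ y, a * y = y * a := by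
  constructor
  · intro h
    have ha : star a = a := by simpa using (sub_eq_zero.mp (h 1)).symm
    exact ⟨ha, fun y => by simpa [ha, sub_eq_zero] using h y⟩
  · rintro ⟨ha, hc⟩ y
    rw [ha, hc, sub_self]

end StarRing

theorem exists_smul_one_iff_forall_mul_comm {K A : Type*} [CommSemiring K] [Semiring A]
    [Algebra K A] (hcenter : ∀ a : A, (∀ x : A, a * x = x * a) → ∃ c : K, a = c • (1 : A))
    {a : A} : (∃ c : K, a = c • (1 : A)) ↔ ∀ x, a * x = x * a := by
  refine ⟨?_, hcenter a⟩
  rintro ⟨c, rfl⟩ x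
  rw [smul_one_mul, mul_smul_one]

section ComplexStarAlgebra

variable {A : Type*} [Ring A] [Algebra ℂ A] [StarRing A] [StarModule ℂ A]

theorem commute_of_forall_isSelfAdjoint_commute {a : A}
    (h : ∀ y : A, IsSelfAdjoint y → Commute a y) (x : A) : Commute a x := by
  rw [← realPart_add_I_smul_imaginaryPart x]
  exact (h _ (ℜ x).2).add_right ((h _ (ℑ x).2).smul_right Complex.I)

theorem forall_isSelfAdjoint_mul_sub_mul_star_eq_zero_iff {a : A} :
    (∀ y, star y = y → y * a - a * star y = 0) ↔ ∀ x, a * x = x * a := by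
  constructor
  · intro h x
    refine (commute_of_forall_isSelfAdjoint_commute (fun y hy => ?_) x).eq
    simpa [Commute, SemiconjBy, hy.star_eq, sub_eq_zero, eq_comm] using h y hy
  · intro h y hy
    rw [hy, h, sub_self]

theorem exists_real_smul_one_iff_forall_mul_comm
    (hcenter : ∀ a : A, (∀ x : A, a * x = x * a) → ∃ c : ℂ, a = c • (1 : A)) {a : A} :
    (∃ t : ℝ, a = (t : ℂ) • (1 : A)) ↔ star a = a ∧ ∀ x, a * x = x * a := by
  constructor
  · rintro ⟨t, rfl⟩
    refine ⟨by simp [star_smul], fun x => ?_⟩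
    rw [smul_one_mul, mul_smul_one]
  · rintro ⟨ha, hc⟩
    obtain ⟨c, rfl⟩ := hcenter _ hc
    refine ⟨c.re, ?_⟩
    calc c • (1 : A) = ℜ (c • (1 : A)) := (IsSelfAdjoint.coe_realPart ha).symm
      _ = (c.re : ℂ) • (1 : A) := by
        simp [realPart_smul, Complex.coe_smul]

end ComplexStarAlgebra

theorem Function.Surjective.image_setOf_eq {α β : Type*} {f : α → β} (hf : Surjective f)
    {p : α → Prop} {q : β → Prop} (hpq : ∀ a, p a ↔ q (f a)) : f '' {a | p a} = {b | q b} :=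
  (congrArg (f '' ·) (Set.ext hpq)).trans (hf.image_preimage _)

section SkewLieProduct

variable {A B : Type*}

def PreservesSkewLieProduct [Ring A] [StarRing A] [Ring B] [StarRing B] (Φ : A → B) : Prop :=
  ∀ x y : A, Φ (x * y - y * star x) = Φ x * Φ y - Φ y * star (Φ x)

namespace PreservesSkewLieProduct

variable [Ring A] [StarRing A] [Ring B] [StarRing B] {Φ : A → B}

theorem map_zero (h : PreservesSkewLieProduct Φ) (hΦ : Surjective Φ) : Φ 0 = 0 := by
  obtain ⟨z, hz⟩ := hΦ 0
  simpa [hz] using h z 0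

theorem forall_mul_sub_mul_star_eq_zero_iff (h : PreservesSkewLieProduct Φ) (hΦ : Bijective Φ)
    (a : A) : (∀ y, a * y - y * star a = 0) ↔ ∀ y, Φ a * y - y * star (Φ a) = 0 := by
  have h0 := h.map_zero hΦ.2
  constructor
  · intro ha b
    obtain ⟨y, rfl⟩ := hΦ.2 b
    rw [← h, ha, h0]
  · intro hb y
    apply hΦ.1
    rw [h, hb, h0]

theorem forall_isSelfAdjoint_mul_sub_mul_star_eq_zero_iff (h : PreservesSkewLieProduct Φ)
    (hΦ : Bijective Φ) (hsa : ∀ a, star a = a ↔ star (Φ a) = Φ a) (a : A) :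
    (∀ y, star y = y → y * a - a * star y = 0) ↔
      ∀ y, star y = y → y * Φ a - Φ a * star y = 0 := by
  have h0 := h.map_zero hΦ.2
  constructor
  · intro ha b hb
    obtain ⟨y, rfl⟩ := hΦ.2 b
    rw [← h, ha y ((hsa y).2 hb), h0]
  · intro hb y hy
    apply hΦ.1
    rw [h, hb _ ((hsa y).1 hy), h0]

-- `Φ (s • (a - a*)) = Φ a - (Φ a)*`; if `s = 0` then `Φ 0 = 1` forces `B`, hence `A`, to be trivial.
theorem star_eq_self_iff [Algebra ℂ A] (h : PreservesSkewLieProduct Φ) (hΦ : Bijective Φ) {s : ℂ}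
    (hs : Φ (s • 1) = 1) (a : A) : star a = a ↔ star (Φ a) = Φ a := by
  have h0 := h.map_zero hΦ.2
  rcases eq_or_ne s 0 with rfl | hs0
  · have : Subsingleton B := subsingleton_of_zero_eq_one (by rw [← h0, ← hs, zero_smul])
    have : Subsingleton A := hΦ.1.subsingleton
    exact iff_of_true (Subsingleton.elim _ _) (Subsingleton.elim _ _)
  have key : Φ (s • (a - star a)) = Φ a - star (Φ a) := by
    simpa [hs, smul_sub, smul_mul_assoc, mul_smul_comm] using h a (s • 1)
  calc star a = a ↔ s • (a - star a) = 0 := by rw [smul_eq_zero, sub_eq_zero, eq_comm]; simp [hs0]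
    _ ↔ Φ (s • (a - star a)) = Φ 0 := hΦ.1.eq_iff.symm
    _ ↔ star (Φ a) = Φ a := by rw [key, h0, sub_eq_zero, eq_comm]

end PreservesSkewLieProduct

end SkewLieProduct

theorem stmt_12_general {A B : Type*}
    [Ring A] [Algebra ℂ A] [StarRing A] [StarModule ℂ A]
    [Ring B] [Algebra ℂ B] [StarRing B] [StarModule ℂ B]
    (hAcenter : ∀ a : A, (∀ x : A, a * x = x * a) → ∃ c : ℂ, a = c • (1 : A))
    (hBcenter : ∀ b : B, (∀ x : B, b * x = x * b) → ∃ c : ℂ, b = c • (1 : B))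
    (Φ : A → B) (hΦ : Function.Bijective Φ)
    (h : ∀ x y : A, Φ (x * y - y * star x) = Φ x * Φ y - Φ y * star (Φ x)) :
    Φ '' {a : A | ∃ t : ℝ, a = (t : ℂ) • (1 : A)} =
      {b : B | ∃ t : ℝ, b = (t : ℂ) • (1 : B)} ∧
    (∀ a : A, star a = a ↔ star (Φ a) = Φ a) ∧
    Φ '' {a : A | ∃ c : ℂ, a = c • (1 : A)} = {b : B | ∃ c : ℂ, b = c • (1 : B)} := by
  have hΦ' : PreservesSkewLieProduct Φ := h
  have hreal : Φ '' {a : A | ∃ t : ℝ, a = (t : ℂ) • (1 : A)} =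
      {b : B | ∃ t : ℝ, b = (t : ℂ) • (1 : B)} :=
    hΦ.2.image_setOf_eq fun a => by
      rw [exists_real_smul_one_iff_forall_mul_comm hAcenter,
        exists_real_smul_one_iff_forall_mul_comm hBcenter, ← forall_mul_sub_mul_star_eq_zero_iff,
        ← forall_mul_sub_mul_star_eq_zero_iff, hΦ'.forall_mul_sub_mul_star_eq_zero_iff hΦ]
  obtain ⟨_, ⟨s, rfl⟩, hs⟩ : (1 : B) ∈ Φ '' {a : A | ∃ t : ℝ, a = (t : ℂ) • (1 : A)} :=
    hreal ▸ ⟨1, by simp⟩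
  have hsa := hΦ'.star_eq_self_iff hΦ hs
  refine ⟨hreal, hsa, hΦ.2.image_setOf_eq fun a => ?_⟩
  rw [exists_smul_one_iff_forall_mul_comm hAcenter, exists_smul_one_iff_forall_mul_comm hBcenter,
    ← forall_isSelfAdjoint_mul_sub_mul_star_eq_zero_iff,
    ← forall_isSelfAdjoint_mul_sub_mul_star_eq_zero_iff,
    hΦ'.forall_isSelfAdjoint_mul_sub_mul_star_eq_zero_iff hΦ hsa]

/-- Lemma 2.5': Φ(ℝ·1_A) = ℝ·1_B, Φ preserves self-adjoint elements
in both directions, and Φ(ℂ·1_A) = ℂ·1_B. -/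
theorem stmt_12 {A B : Type*}
    [Ring A] [Algebra ℂ A] [StarRing A] [StarModule ℂ A]
    [Ring B] [Algebra ℂ B] [StarRing B] [StarModule ℂ B]
    (hAprime : ∀ a b : A, (∀ x : A, a * x * b = 0) → a = 0 ∨ b = 0)
    (hBprime : ∀ a b : B, (∀ x : B, a * x * b = 0) → a = 0 ∨ b = 0)
    (hAcenter : ∀ a : A, (∀ x : A, a * x = x * a) → ∃ c : ℂ, a = c • (1 : A))
    (hBcenter : ∀ b : B, (∀ x : B, b * x = x * b) → ∃ c : ℂ, b = c • (1 : B))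
    (hAproj : ∃ p : A, p ≠ 0 ∧ p ≠ 1 ∧ star p = p ∧ p * p = p)
    (hBproj : ∃ q : B, q ≠ 0 ∧ q ≠ 1 ∧ star q = q ∧ q * q = q)
    (Φ : A → B) (hΦ : Function.Bijective Φ)
    (h : ∀ x y : A, Φ (x * y - y * star x) = Φ x * Φ y - Φ y * star (Φ x)) :
    Φ '' {a : A | ∃ t : ℝ, a = (t : ℂ) • (1 : A)} =
      {b : B | ∃ t : ℝ, b = (t : ℂ) • (1 : B)} ∧
    (∀ a : A, star a = a ↔ star (Φ a) = Φ a) ∧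
    Φ '' {a : A | ∃ c : ℂ, a = c • (1 : A)} = {b : B | ∃ c : ℂ, b = c • (1 : B)} :=
  stmt_12_general hAcenter hBcenter Φ hΦ h
end

section
/- Let A and B be unital prime complex *-algebras whose centers equal ℂ·1 and which each contain a nontrivial projection, and let Φ : A → B be a bijective mapping satisfying Φ(xy − yx*) = Φ(x)Φ(y) − Φ(y)Φ(x)* for all x, y ∈ A. Then either Φ(ia) = iΦ(a) for all elements a ∈ A, or Φ(ia) = −iΦ(a) for all elements a ∈ A. -/
/-!
Put `x ∘ y = xy - yx*` and `t = Φ((i/2)·1)`. Since `(i/2)·1 ∘ y = iy`, we get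
`Φ(iy) = t ∘ Φ(y)`, and as `y ↦ iy` commutes with `x ∘ -`, surjectivity of `Φ` makes
`δ = t ∘ -` satisfy `δ(a ∘ b) = a ∘ δ(b)` on `B`. Expanding this identity shows that
`c = ta - at` satisfies `cb = -bc*`; with `b = 1` it is skew, hence central, hence a scalar.
If `[t, a] = λ ≠ 0`, then `[t, a²] = 2λa` is central, so `a` is central and `[t, a] = 0` after
all; hence `t = τ·1` and `Φ(iy) = κΦ(y)` with `κ = τ - τ̄` purely imaginary.
Applying this four times to a preimage of `1` gives `κ⁴ = 1`, so `κ = ±i`.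
-/

open Complex

def skewLie {R : Type*} [Mul R] [Sub R] [Star R] (x y : R) : R := x * y - y * star x

section Ring

variable {R : Type*} [Ring R] [StarRing R]

theorem commutator_mul_eq_neg_mul_star {t : R}
    (hδ : ∀ a b : R, skewLie t (skewLie a b) = skewLie a (skewLie t b)) (a b : R) :
    (t * a - a * t) * b = -(b * star (t * a - a * t)) := by
  have hexpand : (t * a - a * t) * b + b * star (t * a - a * t)
      = skewLie t (skewLie a b) - skewLie a (skewLie t b) := by
    simp only [skewLie, star_sub, star_mul]
    noncomm_ring
  rw [hδ, sub_self] at hexpand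
  exact eq_neg_of_add_eq_zero_left hexpand

theorem commutator_mul_comm {t : R}
    (hδ : ∀ a b : R, skewLie t (skewLie a b) = skewLie a (skewLie t b)) (a b : R) :
    (t * a - a * t) * b = b * (t * a - a * t) := by
  have hskew : star (t * a - a * t) = -(t * a - a * t) := by
    have h1 := commutator_mul_eq_neg_mul_star hδ a 1
    rw [mul_one, one_mul] at h1
    exact (neg_eq_iff_eq_neg.mpr h1).symm
  rw [commutator_mul_eq_neg_mul_star hδ, hskew, mul_neg, neg_neg]

end Ring

theorem commute_of_commutator_central {B : Type*} [Ring B] [Algebra ℂ B]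
    (hcenter : ∀ b : B, (∀ x : B, b * x = x * b) → ∃ c : ℂ, b = c • (1 : B)) {t : B}
    (hcomm : ∀ a x : B, (t * a - a * t) * x = x * (t * a - a * t)) (a : B) :
    t * a = a * t := by
  obtain ⟨c, hc⟩ := hcenter _ (hcomm a)
  by_cases hc0 : c = 0
  · rwa [hc0, zero_smul, sub_eq_zero] at hc
  have hsq : t * (a * a) - a * a * t = (2 * c) • a := by
    calc t * (a * a) - a * a * t = (t * a - a * t) * a + a * (t * a - a * t) := by
          noncomm_ring
      _ = (2 * c) • a := by rw [hc, smul_one_mul, mul_smul_one, ← add_smul, two_mul]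
  have ha : ∀ x : B, a * x = x * a := fun x => by
    have hx := hcomm (a * a) x
    rw [hsq, smul_mul_assoc, mul_smul_comm] at hx
    exact smul_right_injective B (mul_ne_zero two_ne_zero hc0) hx
  exact (ha t).symm

section StarAlgebra

variable {R : Type*} [Ring R] [StarRing R] [Algebra ℂ R]

theorem skewLie_smul_right (c : ℂ) (x y : R) : skewLie x (c • y) = c • skewLie x y := by
  rw [skewLie, skewLie, mul_smul_comm, smul_mul_assoc, smul_sub]

theorem skewLie_smul_one_left [StarModule ℂ R] (c : ℂ) (y : R) :
    skewLie (c • (1 : R)) y = (c - starRingEnd ℂ c) • y := by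
  rw [skewLie, star_smul, star_one, smul_one_mul, mul_smul_one, ← sub_smul]
  rfl

theorem skewLie_half_I_smul_one [StarModule ℂ R] (y : R) :
    skewLie ((I / 2) • (1 : R)) y = I • y := by
  rw [skewLie_smul_one_left]
  congr 1
  simp only [map_div₀, conj_I, map_ofNat]
  ring

end StarAlgebra

theorem pow_eq_one_of_map_smul {A B : Type*} [AddCommGroup A] [Module ℂ A]
    [Ring B] [Algebra ℂ B] [Nontrivial B] {f : A → B} {c κ : ℂ}
    (hf : ∀ y, f (c • y) = κ • f y) (hone : ∃ y, f y = 1) {n : ℕ} (hc : c ^ n = 1) :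
    κ ^ n = 1 := by
  have hpow : ∀ m : ℕ, ∀ y, f (c ^ m • y) = κ ^ m • f y := by
    intro m
    induction m with
    | zero => simp
    | succ m ih => intro y; rw [pow_succ, pow_succ, mul_smul, mul_smul, ih, hf]
  obtain ⟨y, hy⟩ := hone
  have h1 := hpow n y
  rw [hc, one_smul, hy, ← Algebra.algebraMap_eq_smul_one] at h1
  exact (algebraMap ℂ B).injective (by rw [map_one, h1])

theorem sub_conj_eq_I_or_eq_neg_I {τ : ℂ} (h : (τ - starRingEnd ℂ τ) ^ 4 = 1) :
    τ - starRingEnd ℂ τ = I ∨ τ - starRingEnd ℂ τ = -I := by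
  rw [sub_conj] at h ⊢
  have hr : (2 * τ.im) ^ 4 = 1 := by
    rw [mul_pow, I_pow_four, mul_one] at h
    exact_mod_cast h
  rcases pow_eq_one_iff_cases.mp hr with h4 | hr | ⟨hr, -⟩
  · norm_num at h4
  · left; rw [hr]; simp
  · right; rw [hr]; simp

theorem stmt_13_general {A B : Type*}
    [Ring A] [Algebra ℂ A] [StarRing A] [StarModule ℂ A]
    [Ring B] [Algebra ℂ B] [StarRing B] [StarModule ℂ B]
    (hBcenter : ∀ b : B, (∀ x : B, b * x = x * b) → ∃ c : ℂ, b = c • (1 : B))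
    (Φ : A → B) (hΦ : Function.Bijective Φ)
    (h : ∀ x y : A, Φ (x * y - y * star x) = Φ x * Φ y - Φ y * star (Φ x)) :
    (∀ a : A, Φ (Complex.I • a) = Complex.I • Φ a) ∨
    (∀ a : A, Φ (Complex.I • a) = -(Complex.I • Φ a)) := by
  rcases subsingleton_or_nontrivial B with _ | _
  · exact Or.inl fun _ => Subsingleton.elim _ _
  have hΦ' : ∀ x y, Φ (skewLie x y) = skewLie (Φ x) (Φ y) := h
  set t := Φ ((I / 2) • (1 : A))
  have hI : ∀ y, Φ (I • y) = skewLie t (Φ y) := fun y => by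
    rw [← hΦ', skewLie_half_I_smul_one]
  have hδ : ∀ a b, skewLie t (skewLie a b) = skewLie a (skewLie t b) := by
    intro a b
    obtain ⟨x, rfl⟩ := hΦ.2 a
    obtain ⟨y, rfl⟩ := hΦ.2 b
    rw [← hΦ', ← hI, ← hI, ← hΦ', skewLie_smul_right]
  obtain ⟨τ, hτ⟩ :=
    hBcenter t (commute_of_commutator_central hBcenter (commutator_mul_comm hδ))
  have hκ : ∀ y, Φ (I • y) = (τ - starRingEnd ℂ τ) • Φ y := fun y => by
    rw [hI, hτ, skewLie_smul_one_left]
  rcases sub_conj_eq_I_or_eq_neg_I (pow_eq_one_of_map_smul hκ (hΦ.2 1) I_pow_four) with h' | h'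
  · exact Or.inl fun a => by rw [hκ, h']
  · exact Or.inr fun a => by rw [hκ, h', neg_smul]

/-- Lemma 2.6': either Φ(ia) = iΦ(a) for all a, or Φ(ia) = −iΦ(a)
for all a. -/
theorem stmt_13 {A B : Type*}
    [Ring A] [Algebra ℂ A] [StarRing A] [StarModule ℂ A]
    [Ring B] [Algebra ℂ B] [StarRing B] [StarModule ℂ B]
    (hAprime : ∀ a b : A, (∀ x : A, a * x * b = 0) → a = 0 ∨ b = 0)
    (hBprime : ∀ a b : B, (∀ x : B, a * x * b = 0) → a = 0 ∨ b = 0)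
    (hAcenter : ∀ a : A, (∀ x : A, a * x = x * a) → ∃ c : ℂ, a = c • (1 : A))
    (hBcenter : ∀ b : B, (∀ x : B, b * x = x * b) → ∃ c : ℂ, b = c • (1 : B))
    (hAproj : ∃ p : A, p ≠ 0 ∧ p ≠ 1 ∧ star p = p ∧ p * p = p)
    (hBproj : ∃ q : B, q ≠ 0 ∧ q ≠ 1 ∧ star q = q ∧ q * q = q)
    (Φ : A → B) (hΦ : Function.Bijective Φ)
    (h : ∀ x y : A, Φ (x * y - y * star x) = Φ x * Φ y - Φ y * star (Φ x)) :
    (∀ a : A, Φ (Complex.I • a) = Complex.I • Φ a) ∨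
    (∀ a : A, Φ (Complex.I • a) = -(Complex.I • Φ a)) :=
  stmt_13_general hBcenter Φ hΦ h
end

section
/- Let A be a unital prime complex *-algebra with a nontrivial projection p₁, set p₂ = 1 − p₁ and A_ij = p_i A p_j for i, j ∈ {1,2}, let B be a complex *-algebra, and let Φ : A → B be a bijective mapping satisfying Φ(xy + yx*) = Φ(x)Φ(y) + Φ(y)Φ(x)* for all x, y ∈ A. Then for arbitrary elements b₁₂ ∈ A₁₂ and c₂₁ ∈ A₂₁: Φ(b₁₂ + c₂₁) = Φ(b₁₂) + Φ(c₂₁). -/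
/-!
Pick `t` with `Φ t = Φ b₁₂ + Φ c₂₁`. Since `Φ` preserves `x ◇ y = x y + y x*`, the equation
`Φ t = Φ b₁₂ + Φ c₂₁` propagates to `Φ (x ◇ t) = Φ (x ◇ b₁₂) + Φ (x ◇ c₂₁)` and likewise on the
right. Taking `x = p₁` and `y ∈ {p₁, p₂}`, the right-hand sides collapse (using `Φ 0 = 0`) to
images of `t`, `c₂₁ + c₂₁*` and `b₁₂ + b₁₂*`, so injectivity gives `p₁ ◇ t = t`,
`t ◇ p₁ = c₂₁ + c₂₁*` and `t ◇ p₂ = b₁₂ + b₁₂*`. These equations determine the four Peirce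
components of `t`: the diagonal ones vanish and the off-diagonal ones are `b₁₂` and `c₂₁`.
-/

def jordanStarProd {R : Type*} [Mul R] [Add R] [Star R] (x y : R) : R := x * y + y * star x

local infixl:70 " ◇ " => jordanStarProd

theorem peirce_decomposition {R : Type*} [Ring R] (p t : R) :
    t = p * t * p + p * t * (1 - p) + (1 - p) * t * p + (1 - p) * t * (1 - p) := by
  noncomm_ring

namespace IsIdempotentElem

variable {R : Type*} [Ring R] {p b : R}

theorem eq_mul_mul_one_sub_iff (hp : IsIdempotentElem p) :
    b = p * b * (1 - p) ↔ p * b = b ∧ b * p = 0 := by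
  constructor
  · intro hb
    constructor
    · rw [hb, ← mul_assoc, ← mul_assoc, hp.eq]
    · rw [hb, mul_assoc, hp.one_sub_mul_self, mul_zero]
  · rintro ⟨hb₁, hb₂⟩
    rw [mul_sub, mul_one, hb₁, hb₂, sub_zero]

theorem eq_one_sub_mul_mul_iff (hp : IsIdempotentElem p) :
    b = (1 - p) * b * p ↔ p * b = 0 ∧ b * p = b := by
  constructor
  · intro hb
    constructor
    · rw [hb, ← mul_assoc, ← mul_assoc, hp.mul_one_sub_self, zero_mul, zero_mul]
    · rw [hb, mul_assoc, hp.eq]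
  · rintro ⟨hb₁, hb₂⟩
    rw [mul_assoc, hb₂, sub_mul, one_mul, hb₁, sub_zero]

end IsIdempotentElem

namespace IsSelfAdjoint

variable {R : Type*} [Mul R] [Add R] [StarMul R] {p : R}

theorem jordanStarProd_left (hp : IsSelfAdjoint p) (x : R) : p ◇ x = p * x + x * p := by
  rw [jordanStarProd, hp.star_eq]

theorem jordanStarProd_right (hp : IsSelfAdjoint p) (x : R) : x ◇ p = x * p + star (x * p) := by
  rw [jordanStarProd, star_mul, hp.star_eq]

end IsSelfAdjoint

namespace IsStarProjection

variable {R : Type*} [Ring R] [StarRing R] {p b c t : R}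

theorem mul_mul_self_eq_zero_of_jordanStarProd_eq_self (hp : IsStarProjection p)
    (h : p ◇ t = t) : p * t * p = 0 :=
  calc p * t * p = (p * p) * t * p + p * t * (p * p) - p * t * p := by
        rw [hp.isIdempotentElem.eq]; abel
    _ = p * (p * t + t * p) * p - p * t * p := by noncomm_ring
    _ = 0 := by rw [← hp.isSelfAdjoint.jordanStarProd_left, h, sub_self]

theorem one_sub_mul_mul_one_sub_eq_zero_of_jordanStarProd_eq_self (hp : IsStarProjection p)
    (h : p ◇ t = t) : (1 - p) * t * (1 - p) = 0 :=
  calc (1 - p) * t * (1 - p) = (1 - p) * (p * t + t * p) * (1 - p) := by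
        rw [← hp.isSelfAdjoint.jordanStarProd_left, h]
    _ = (1 - p) * p * (t * (1 - p)) + (1 - p) * t * (p * (1 - p)) := by noncomm_ring
    _ = 0 := by rw [hp.one_sub_mul_self, hp.mul_one_sub_self, zero_mul, mul_zero, add_zero]

theorem one_sub_mul_mul_eq_of_jordanStarProd_eq_add_star (hp : IsStarProjection p)
    (hc₁ : p * c = 0) (hc₂ : c * p = c) (h : t ◇ p = c + star c) : (1 - p) * t * p = c := by
  have hcs : star c * p = 0 := by
    rw [← hp.isSelfAdjoint.star_eq, ← star_mul, hc₁, star_zero]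
  calc (1 - p) * t * p = (1 - p) * t * (p * p) + (1 - p) * p * (star t * p) := by
        rw [hp.isIdempotentElem.eq, hp.one_sub_mul_self, zero_mul, add_zero]
    _ = (1 - p) * (t ◇ p) * p := by rw [jordanStarProd]; noncomm_ring
    _ = (c - p * c) * p + (1 - p) * (star c * p) := by rw [h]; noncomm_ring
    _ = c := by rw [hc₁, sub_zero, hc₂, hcs, mul_zero, add_zero]

theorem eq_add_of_jordanStarProd_eq (hp : IsStarProjection p)
    (hb₁ : p * b = b) (hb₂ : b * p = 0) (hc₁ : p * c = 0) (hc₂ : c * p = c)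
    (h₁ : p ◇ t = t) (h₂ : t ◇ p = c + star c) (h₃ : t ◇ (1 - p) = b + star b) :
    t = b + c := by
  have h₁₂ : p * t * (1 - p) = b := by
    simpa only [sub_sub_cancel] using
      hp.one_sub.one_sub_mul_mul_eq_of_jordanStarProd_eq_add_star
        (by rw [sub_mul, one_mul, hb₁, sub_self]) (by rw [mul_sub, mul_one, hb₂, sub_zero]) h₃
  rw [peirce_decomposition p t, hp.mul_mul_self_eq_zero_of_jordanStarProd_eq_self h₁, h₁₂,
    hp.one_sub_mul_mul_eq_of_jordanStarProd_eq_add_star hc₁ hc₂ h₂,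
    hp.one_sub_mul_mul_one_sub_eq_zero_of_jordanStarProd_eq_self h₁, zero_add, add_zero]

end IsStarProjection

section JordanStarProdPreserving

variable {A B : Type*} [NonUnitalNonAssocSemiring A] [StarAddMonoid A]
  [NonUnitalNonAssocSemiring B] [StarAddMonoid B] {Φ : A → B}

theorem map_zero_of_map_jordanStarProd (h : ∀ x y, Φ (x ◇ y) = Φ x ◇ Φ y)
    (hΦ : Function.Surjective Φ) : Φ 0 = 0 := by
  obtain ⟨z, hz⟩ := hΦ 0
  simpa [jordanStarProd, hz] using h 0 z

theorem map_jordanStarProd_left_of_map_eq_add (h : ∀ x y, Φ (x ◇ y) = Φ x ◇ Φ y) {t a b : A}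
    (ht : Φ t = Φ a + Φ b) (x : A) : Φ (x ◇ t) = Φ (x ◇ a) + Φ (x ◇ b) := by
  rw [h, h, h, ht]
  simp only [jordanStarProd, mul_add, add_mul]
  abel

theorem map_jordanStarProd_right_of_map_eq_add (h : ∀ x y, Φ (x ◇ y) = Φ x ◇ Φ y) {t a b : A}
    (ht : Φ t = Φ a + Φ b) (y : A) : Φ (t ◇ y) = Φ (a ◇ y) + Φ (b ◇ y) := by
  rw [h, h, h, ht]
  simp only [jordanStarProd, star_add, mul_add, add_mul]
  abel

end JordanStarProdPreserving

theorem stmt_15_general {A B : Type*}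
    [Ring A] [StarRing A]
    [Ring B] [StarRing B]
    (p₁ p₂ : A) (hp₁sa : star p₁ = p₁)
    (hp₁idem : p₁ * p₁ = p₁) (hp₂ : p₂ = 1 - p₁)
    (Φ : A → B) (hΦ : Function.Bijective Φ)
    (h : ∀ x y : A, Φ (x * y + y * star x) = Φ x * Φ y + Φ y * star (Φ x))
    (b₁₂ c₂₁ : A)
    (hb : b₁₂ = p₁ * b₁₂ * p₂) (hc : c₂₁ = p₂ * c₂₁ * p₁) :
    Φ (b₁₂ + c₂₁) = Φ b₁₂ + Φ c₂₁ := by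
  subst hp₂
  have hp : IsStarProjection p₁ := ⟨hp₁idem, hp₁sa⟩
  obtain ⟨hb₁, hb₂⟩ := hp.isIdempotentElem.eq_mul_mul_one_sub_iff.mp hb
  obtain ⟨hc₁, hc₂⟩ := hp.isIdempotentElem.eq_one_sub_mul_mul_iff.mp hc
  have hΦ0 : Φ 0 = 0 := map_zero_of_map_jordanStarProd h hΦ.2
  obtain ⟨t, ht⟩ := hΦ.2 (Φ b₁₂ + Φ c₂₁)
  suffices t = b₁₂ + c₂₁ by rw [← this, ht]
  refine hp.eq_add_of_jordanStarProd_eq hb₁ hb₂ hc₁ hc₂ (hΦ.1 ?_) (hΦ.1 ?_) (hΦ.1 ?_)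
  · rw [map_jordanStarProd_left_of_map_eq_add h ht, hp.isSelfAdjoint.jordanStarProd_left,
      hp.isSelfAdjoint.jordanStarProd_left, hb₁, hb₂, hc₁, hc₂, add_zero, zero_add, ht]
  · rw [map_jordanStarProd_right_of_map_eq_add h ht, hp.isSelfAdjoint.jordanStarProd_right,
      hp.isSelfAdjoint.jordanStarProd_right, hb₂, hc₂, star_zero, add_zero, hΦ0, zero_add]
  · rw [map_jordanStarProd_right_of_map_eq_add h ht, hp.one_sub.isSelfAdjoint.jordanStarProd_right,
      hp.one_sub.isSelfAdjoint.jordanStarProd_right, mul_sub, mul_sub, mul_one, mul_one, hb₂, hc₂,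
      sub_zero, sub_self, star_zero, add_zero, hΦ0, add_zero]

/-- Claim 2.2: Φ(b₁₂ + c₂₁) = Φ(b₁₂) + Φ(c₂₁).
Membership a ∈ A_ij = pᵢ A pⱼ is expressed as a = pᵢ * a * pⱼ. -/
theorem stmt_15 {A B : Type*}
    [Ring A] [Algebra ℂ A] [StarRing A] [StarModule ℂ A]
    [Ring B] [Algebra ℂ B] [StarRing B] [StarModule ℂ B]
    (hAprime : ∀ a b : A, (∀ x : A, a * x * b = 0) → a = 0 ∨ b = 0)
    (p₁ p₂ : A) (hp₁0 : p₁ ≠ 0) (hp₁1 : p₁ ≠ 1) (hp₁sa : star p₁ = p₁)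
    (hp₁idem : p₁ * p₁ = p₁) (hp₂ : p₂ = 1 - p₁)
    (Φ : A → B) (hΦ : Function.Bijective Φ)
    (h : ∀ x y : A, Φ (x * y + y * star x) = Φ x * Φ y + Φ y * star (Φ x))
    (b₁₂ c₂₁ : A)
    (hb : b₁₂ = p₁ * b₁₂ * p₂) (hc : c₂₁ = p₂ * c₂₁ * p₁) :
    Φ (b₁₂ + c₂₁) = Φ b₁₂ + Φ c₂₁ :=
  stmt_15_general p₁ p₂ hp₁sa hp₁idem hp₂ Φ hΦ h b₁₂ c₂₁ hb hc
end

section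
/- Let A be a unital prime complex *-algebra with a nontrivial projection p₁, set p₂ = 1 − p₁ and A_ij = p_i A p_j for i, j ∈ {1,2}, let B be a complex *-algebra, and let Φ : A → B be a bijective mapping satisfying Φ(xy + yx*) = Φ(x)Φ(y) + Φ(y)Φ(x)* for all x, y ∈ A. Then for arbitrary elements a₁₁ ∈ A₁₁, b₁₂ ∈ A₁₂, c₂₁ ∈ A₂₁ and d₂₂ ∈ A₂₂: Φ(a₁₁ + b₁₂ + c₂₁ + d₂₂) = Φ(a₁₁) + Φ(b₁₂) + Φ(c₂₁) + Φ(d₂₂). -/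
/-!
Write `x ⋄ y = x y + y x*`, so that `Φ (x ⋄ y) = Φ x ⋄ Φ y`. As `Φ` is bijective, the addition of
`B` pulls back to a commutative, associative operation `a ⊞ b = Φ⁻¹ (Φ a + Φ b)` on `A`, and both
`y ⋄ ·` and `· ⋄ y` distribute over `⊞`. We must show `T = S` for `T = a ⊞ b ⊞ c ⊞ d` and
`S = a + b + c + d`. For suitable `y` built from `p = p₁` and `q = p₂`, the products of `y` with
the Peirce components vanish or are again Peirce components, so `y ⋄ T = y ⋄ S` follows from the
same claim with fewer components; and `T` is recovered from a few such products:
* for `A₁₂ + A₂₁`, from `(q - p) ⋄ T`, `T ⋄ p` and `T ⋄ q`;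
* for `A₁₁ + A₁₂ + A₂₁`, from `(q - p) ⋄ T` and the `f ⋄ T` with `f ∈ A₂₂`; these turn the
  off-diagonal parts into `f (q T p)` and `(p T q) f*`, and primeness of `A` recovers them;
* for all four components, from `p ⋄ T` and `q ⋄ T`, whose sum is `T + T`.
-/

open Function

def jordanStar {R : Type*} [Mul R] [Add R] [Star R] (x y : R) : R := x * y + y * star x

local infixl:70 " ⋄ " => jordanStar

def IsPrimeRing (R : Type*) [Mul R] [Zero R] : Prop :=
  ∀ a b : R, (∀ x : R, a * x * b = 0) → a = 0 ∨ b = 0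

section JordanStar

variable {R : Type*}

theorem jordanStar_add_right [NonUnitalNonAssocSemiring R] [Star R] (y a b : R) :
    y ⋄ (a + b) = y ⋄ a + y ⋄ b := by
  simp only [jordanStar, mul_add, add_mul]
  abel

theorem jordanStar_add_left [NonUnitalNonAssocSemiring R] [StarAddMonoid R] (a b y : R) :
    (a + b) ⋄ y = a ⋄ y + b ⋄ y := by
  simp only [jordanStar, star_add, mul_add, add_mul]
  abel

theorem one_jordanStar [NonAssocSemiring R] [StarMul R] (x : R) : 1 ⋄ x = x + x := by
  rw [jordanStar, star_one, one_mul, mul_one]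

theorem eq_of_add_self_eq_add_self [AddMonoid R] [IsAddTorsionFree R] {a b : R}
    (h : a + a = b + b) : a = b :=
  (nsmul_right_inj two_ne_zero).mp (by rwa [two_nsmul, two_nsmul])

theorem eq_of_jordanStar_eq_of_add_eq_one [NonAssocSemiring R] [StarRing R] [IsAddTorsionFree R]
    {p q T S : R} (hpq : p + q = 1) (hp : p ⋄ T = p ⋄ S) (hq : q ⋄ T = q ⋄ S) : T = S := by
  apply eq_of_add_self_eq_add_self
  rw [← one_jordanStar, ← one_jordanStar, ← hpq, jordanStar_add_left, jordanStar_add_left, hp, hq]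

end JordanStar

structure IsPeircePair {R : Type*} [Ring R] [StarRing R] (p q : R) : Prop where
  isStarProjection : IsStarProjection p
  add_eq_one : p + q = 1

namespace IsPeircePair

variable {R : Type*} [Ring R] [StarRing R] {p q a b c d T S : R}

theorem eq_one_sub (h : IsPeircePair p q) : q = 1 - p :=
  eq_sub_of_add_eq' h.add_eq_one

theorem symm (h : IsPeircePair p q) : IsPeircePair q p where
  isStarProjection := h.eq_one_sub ▸ h.isStarProjection.one_sub
  add_eq_one := by rw [add_comm, h.add_eq_one]

theorem eq_of_corners_eq (h : IsPeircePair p q) (h₁₁ : p * T * p = p * S * p)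
    (h₁₂ : p * T * q = p * S * q) (h₂₁ : q * T * p = q * S * p) (h₂₂ : q * T * q = q * S * q) :
    T = S := by
  have decompose (x : R) : x = p * x * p + p * x * q + q * x * p + q * x * q := calc
    x = (p + q) * x * (p + q) := by rw [h.add_eq_one, one_mul, mul_one]
    _ = p * x * p + p * x * q + q * x * p + q * x * q := by noncomm_ring
  rw [decompose T, decompose S, h₁₁, h₁₂, h₂₁, h₂₂]

theorem diagCorners_eq_of_sub_jordanStar_eq [IsAddTorsionFree R] (h : IsPeircePair p q)
    (hs : (q - p) ⋄ T = (q - p) ⋄ S) : p * T * p = p * S * p ∧ q * T * q = q * S * q := by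
  obtain ⟨hpp, hsp⟩ := h.isStarProjection
  obtain rfl := h.eq_one_sub
  have corner₁₁ (x : R) : p * ((1 - p - p) ⋄ x) * p = -(p * x * p + p * x * p) := by
    simp only [jordanStar, star_sub, star_one, hsp.star_eq, mul_add, add_mul, mul_sub, sub_mul,
      mul_one, one_mul, mul_assoc, hpp.eq, hpp.mul_self_mul]
    abel
  have corner₂₂ (x : R) :
      (1 - p) * ((1 - p - p) ⋄ x) * (1 - p) = (1 - p) * x * (1 - p) + (1 - p) * x * (1 - p) := by
    simp only [jordanStar, star_sub, star_one, hsp.star_eq, mul_add, add_mul, mul_sub, sub_mul,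
      mul_one, one_mul, mul_assoc, hpp.eq, hpp.mul_self_mul]
    abel
  constructor
  · apply eq_of_add_self_eq_add_self
    rw [← neg_inj, ← corner₁₁, ← corner₁₁, hs]
  · apply eq_of_add_self_eq_add_self
    rw [← corner₂₂, ← corner₂₂, hs]

theorem mul_jordanStar_proj_mul (h : IsPeircePair p q) (x : R) : q * (x ⋄ p) * p = q * x * p := by
  obtain ⟨hpp, -⟩ := h.isStarProjection
  obtain rfl := h.eq_one_sub
  simp only [jordanStar, mul_add, add_mul, sub_mul, one_mul, mul_assoc, hpp.eq, hpp.mul_self_mul]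
  abel

theorem mul_corner_jordanStar_mul₂₁ (h : IsPeircePair p q) (x y : R) :
    q * ((q * y * q) ⋄ x) * p = q * y * (q * x * p) := by
  obtain ⟨hpp, hsp⟩ := h.isStarProjection
  obtain rfl := h.eq_one_sub
  simp only [jordanStar, star_mul, star_sub, hsp.star_eq, mul_add, add_mul, mul_sub, sub_mul,
    mul_one, one_mul, mul_assoc, hpp.eq, hpp.mul_self_mul]
  abel

theorem mul_corner_jordanStar_mul₁₂ (h : IsPeircePair p q) (x y : R) :
    p * ((q * star y * q) ⋄ x) * q = p * x * q * y * q := by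
  obtain ⟨hpp, hsp⟩ := h.isStarProjection
  obtain rfl := h.eq_one_sub
  simp only [jordanStar, star_mul, star_sub, star_star, hsp.star_eq, mul_add, add_mul, mul_sub,
    sub_mul, mul_one, one_mul, mul_assoc, hpp.eq, hpp.mul_self_mul]
  abel

theorem eq_of_sub_jordanStar_eq_of_jordanStar_proj_eq [IsAddTorsionFree R]
    (h : IsPeircePair p q) (hs : (q - p) ⋄ T = (q - p) ⋄ S) (hp : T ⋄ p = S ⋄ p)
    (hq : T ⋄ q = S ⋄ q) : T = S := by
  obtain ⟨h₁₁, h₂₂⟩ := h.diagCorners_eq_of_sub_jordanStar_eq hs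
  refine h.eq_of_corners_eq h₁₁ ?_ ?_ h₂₂
  · rw [← h.symm.mul_jordanStar_proj_mul, hq, h.symm.mul_jordanStar_proj_mul]
  · rw [← h.mul_jordanStar_proj_mul, hp, h.mul_jordanStar_proj_mul]

theorem eq_of_sub_jordanStar_eq_of_corner_jordanStar_eq [IsAddTorsionFree R]
    (h : IsPeircePair p q) (hR : IsPrimeRing R) (hq0 : q ≠ 0)
    (hs : (q - p) ⋄ T = (q - p) ⋄ S) (hf : ∀ y, (q * y * q) ⋄ T = (q * y * q) ⋄ S) : T = S := by
  obtain ⟨h₁₁, h₂₂⟩ := h.diagCorners_eq_of_sub_jordanStar_eq hs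
  refine h.eq_of_corners_eq h₁₁ ?_ ?_ h₂₂
  · have hz (y : R) : (p * T * q - p * S * q) * y * q = 0 := by
      rw [sub_mul, sub_mul, ← h.mul_corner_jordanStar_mul₁₂, ← h.mul_corner_jordanStar_mul₁₂, hf,
        sub_self]
    exact sub_eq_zero.mp ((hR _ _ hz).resolve_right hq0)
  · have hz (y : R) : q * y * (q * T * p - q * S * p) = 0 := by
      rw [mul_sub, ← h.mul_corner_jordanStar_mul₂₁, ← h.mul_corner_jordanStar_mul₂₁, hf, sub_self]
    exact sub_eq_zero.mp ((hR _ _ hz).resolve_left hq0)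

theorem sub_jordanStar_eq_zero_of_mem₁₂ (h : IsPeircePair p q) (hb : b = p * b * q) :
    (q - p) ⋄ b = 0 := by
  obtain ⟨hpp, hsp⟩ := h.isStarProjection
  obtain rfl := h.eq_one_sub
  rw [hb]
  simp only [jordanStar, star_sub, star_one, hsp.star_eq, mul_sub, sub_mul, mul_one, one_mul,
    mul_assoc, hpp.eq, hpp.mul_self_mul]
  abel

theorem sub_jordanStar_eq_zero_of_mem₂₁ (h : IsPeircePair p q) (hc : c = q * c * p) :
    (q - p) ⋄ c = 0 := by
  obtain ⟨hpp, hsp⟩ := h.isStarProjection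
  obtain rfl := h.eq_one_sub
  rw [hc]
  simp only [jordanStar, star_sub, star_one, hsp.star_eq, mul_sub, sub_mul, mul_one, one_mul,
    mul_assoc, hpp.eq, hpp.mul_self_mul]
  abel

theorem jordanStar_proj_eq_zero_of_mem₁₂ (h : IsPeircePair p q) (hb : b = p * b * q) :
    b ⋄ p = 0 := by
  obtain ⟨hpp, hsp⟩ := h.isStarProjection
  obtain rfl := h.eq_one_sub
  rw [hb]
  simp only [jordanStar, star_mul, star_sub, hsp.star_eq, mul_sub, sub_mul, mul_one, mul_assoc,
    hpp.eq, hpp.mul_self_mul]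
  abel

theorem corner_jordanStar_eq_zero_of_mem₁₁ (h : IsPeircePair p q) (ha : a = p * a * p) (y : R) :
    (q * y * q) ⋄ a = 0 := by
  obtain ⟨hpp, hsp⟩ := h.isStarProjection
  obtain rfl := h.eq_one_sub
  rw [ha]
  simp only [jordanStar, star_mul, star_sub, hsp.star_eq, mul_sub, sub_mul, mul_one, one_mul,
    mul_assoc, hpp.mul_self_mul]
  abel

theorem corner_jordanStar_mem₁₂ (h : IsPeircePair p q) (hb : b = p * b * q) (y : R) :
    (q * y * q) ⋄ b = p * ((q * y * q) ⋄ b) * q := by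
  obtain ⟨hpp, hsp⟩ := h.isStarProjection
  obtain rfl := h.eq_one_sub
  rw [hb]
  simp only [jordanStar, star_mul, star_sub, hsp.star_eq, mul_add, add_mul, mul_sub, sub_mul,
    mul_one, one_mul, mul_assoc, hpp.eq, hpp.mul_self_mul]
  abel

theorem corner_jordanStar_mem₂₁ (h : IsPeircePair p q) (hc : c = q * c * p) (y : R) :
    (q * y * q) ⋄ c = q * ((q * y * q) ⋄ c) * p := by
  obtain ⟨hpp, hsp⟩ := h.isStarProjection
  obtain rfl := h.eq_one_sub
  rw [hc]
  simp only [jordanStar, star_mul, star_sub, hsp.star_eq, mul_add, add_mul, mul_sub, sub_mul,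
    mul_one, one_mul, mul_assoc, hpp.eq, hpp.mul_self_mul]
  abel

theorem jordanStar_eq_add_self_of_mem₁₁ (h : IsPeircePair p q) (ha : a = p * a * p) :
    p ⋄ a = a + a := by
  obtain ⟨hpp, hsp⟩ := h.isStarProjection
  rw [ha]
  simp only [jordanStar, hsp.star_eq, mul_assoc, hpp.eq, hpp.mul_self_mul]

theorem jordanStar_eq_self_of_mem₁₂ (h : IsPeircePair p q) (hb : b = p * b * q) :
    p ⋄ b = b := by
  obtain ⟨hpp, hsp⟩ := h.isStarProjection
  obtain rfl := h.eq_one_sub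
  rw [hb]
  simp only [jordanStar, hsp.star_eq, mul_sub, sub_mul, mul_one, mul_assoc, hpp.eq,
    hpp.mul_self_mul]
  abel

theorem jordanStar_eq_self_of_mem₂₁ (h : IsPeircePair p q) (hc : c = q * c * p) :
    p ⋄ c = c := by
  obtain ⟨hpp, hsp⟩ := h.isStarProjection
  obtain rfl := h.eq_one_sub
  rw [hc]
  simp only [jordanStar, hsp.star_eq, mul_sub, sub_mul, one_mul, mul_assoc, hpp.eq,
    hpp.mul_self_mul]
  abel

theorem jordanStar_eq_zero_of_mem₂₂ (h : IsPeircePair p q) (hd : d = q * d * q) :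
    p ⋄ d = 0 := by
  obtain ⟨hpp, hsp⟩ := h.isStarProjection
  obtain rfl := h.eq_one_sub
  rw [hd]
  simp only [jordanStar, hsp.star_eq, mul_sub, sub_mul, mul_one, one_mul, mul_assoc, hpp.eq,
    hpp.mul_self_mul]
  abel

end IsPeircePair

noncomputable def pullbackAdd {A B : Type*} [Nonempty A] [Add B] (Φ : A → B) (a b : A) : A :=
  invFun Φ (Φ a + Φ b)

local notation:65 a:65 " ⊞[" Φ "] " b:66 => pullbackAdd Φ a b

section PullbackAdd

variable {A B : Type*} [Nonempty A] {Φ : A → B} {a b c : A}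

theorem map_pullbackAdd [Add B] (hΦ : Surjective Φ) (a b : A) : Φ (a ⊞[Φ] b) = Φ a + Φ b :=
  invFun_eq (hΦ _)

theorem eq_pullbackAdd_iff [Add B] (hΦ : Bijective Φ) : c = a ⊞[Φ] b ↔ Φ c = Φ a + Φ b := by
  rw [← map_pullbackAdd hΦ.2, hΦ.1.eq_iff]

theorem pullbackAdd_comm [AddCommMagma B] (Φ : A → B) (a b : A) : a ⊞[Φ] b = b ⊞[Φ] a := by
  rw [pullbackAdd, pullbackAdd, add_comm]

theorem pullbackAdd_assoc [AddSemigroup B] (hΦ : Surjective Φ) (a b c : A) :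
    a ⊞[Φ] b ⊞[Φ] c = a ⊞[Φ] (b ⊞[Φ] c) := by
  simp only [pullbackAdd, invFun_eq (hΦ _), add_assoc]

theorem pullbackAdd_zero [Zero A] [AddZeroClass B] (hΦ : Bijective Φ) (h0 : Φ 0 = 0) (a : A) :
    a ⊞[Φ] 0 = a := by
  rw [eq_comm, eq_pullbackAdd_iff hΦ, h0, add_zero]

theorem zero_pullbackAdd [Zero A] [AddCommMonoid B] (hΦ : Bijective Φ) (h0 : Φ 0 = 0) (a : A) :
    0 ⊞[Φ] a = a := by
  rw [pullbackAdd_comm, pullbackAdd_zero hΦ h0]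

end PullbackAdd

section PreservesJordanStar

variable {A B : Type*} [Ring A] [StarRing A] [Ring B] [StarRing B] {Φ : A → B} {a b c : A}

def PreservesJordanStar (Φ : A → B) : Prop := ∀ x y, Φ (x ⋄ y) = Φ x ⋄ Φ y

theorem PreservesJordanStar.map_zero (hJ : PreservesJordanStar Φ) (hΦ : Surjective Φ) :
    Φ 0 = 0 := by
  obtain ⟨z, hz⟩ := hΦ 0
  calc Φ 0 = Φ (z ⋄ 0) := by rw [jordanStar, mul_zero, zero_mul, add_zero]
    _ = 0 := by rw [hJ, hz, jordanStar, star_zero, zero_mul, mul_zero, add_zero]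

theorem jordanStar_pullbackAdd (hΦ : Bijective Φ) (hJ : PreservesJordanStar Φ) (y a b : A) :
    y ⋄ (a ⊞[Φ] b) = (y ⋄ a) ⊞[Φ] (y ⋄ b) := by
  rw [eq_pullbackAdd_iff hΦ, hJ, hJ, hJ, map_pullbackAdd hΦ.2, jordanStar_add_right]

theorem pullbackAdd_jordanStar (hΦ : Bijective Φ) (hJ : PreservesJordanStar Φ) (a b y : A) :
    (a ⊞[Φ] b) ⋄ y = (a ⋄ y) ⊞[Φ] (b ⋄ y) := by
  rw [eq_pullbackAdd_iff hΦ, hJ, hJ, hJ, map_pullbackAdd hΦ.2, jordanStar_add_left]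

namespace IsPeircePair

variable [IsAddTorsionFree A] {p q d : A}

theorem pullbackAdd_eq_add_of_mem₁₂_of_mem₂₁ (h : IsPeircePair p q) (hΦ : Bijective Φ)
    (hJ : PreservesJordanStar Φ) (hb : b = p * b * q) (hc : c = q * c * p) :
    b ⊞[Φ] c = b + c := by
  have h0 := hJ.map_zero hΦ.2
  apply h.eq_of_sub_jordanStar_eq_of_jordanStar_proj_eq
  · rw [jordanStar_pullbackAdd hΦ hJ, jordanStar_add_right, h.sub_jordanStar_eq_zero_of_mem₁₂ hb,
      h.sub_jordanStar_eq_zero_of_mem₂₁ hc, pullbackAdd_zero hΦ h0, add_zero]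
  · rw [pullbackAdd_jordanStar hΦ hJ, jordanStar_add_left, h.jordanStar_proj_eq_zero_of_mem₁₂ hb,
      zero_pullbackAdd hΦ h0, zero_add]
  · rw [pullbackAdd_jordanStar hΦ hJ, jordanStar_add_left,
      h.symm.jordanStar_proj_eq_zero_of_mem₁₂ hc, pullbackAdd_zero hΦ h0, add_zero]

theorem pullbackAdd_eq_add_of_mem₁₁_of_mem₁₂_of_mem₂₁ (h : IsPeircePair p q) (hΦ : Bijective Φ)
    (hJ : PreservesJordanStar Φ) (hA : IsPrimeRing A) (hq0 : q ≠ 0)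
    (ha : a = p * a * p) (hb : b = p * b * q) (hc : c = q * c * p) :
    a ⊞[Φ] b ⊞[Φ] c = a + b + c := by
  have h0 := hJ.map_zero hΦ.2
  apply h.eq_of_sub_jordanStar_eq_of_corner_jordanStar_eq hA hq0
  · simp only [jordanStar_pullbackAdd hΦ hJ, jordanStar_add_right,
      h.sub_jordanStar_eq_zero_of_mem₁₂ hb, h.sub_jordanStar_eq_zero_of_mem₂₁ hc,
      pullbackAdd_zero hΦ h0, add_zero]
  · intro y
    simp only [jordanStar_pullbackAdd hΦ hJ, jordanStar_add_right,
      h.corner_jordanStar_eq_zero_of_mem₁₁ ha, zero_pullbackAdd hΦ h0, zero_add]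
    exact h.pullbackAdd_eq_add_of_mem₁₂_of_mem₂₁ hΦ hJ (h.corner_jordanStar_mem₁₂ hb y)
      (h.corner_jordanStar_mem₂₁ hc y)

theorem pullbackAdd_eq_add_of_mem₁₁_of_mem₁₂_of_mem₂₁_of_mem₂₂ (h : IsPeircePair p q)
    (hΦ : Bijective Φ) (hJ : PreservesJordanStar Φ) (hA : IsPrimeRing A) (hp0 : p ≠ 0)
    (hq0 : q ≠ 0) (ha : a = p * a * p) (hb : b = p * b * q) (hc : c = q * c * p)
    (hd : d = q * d * q) :
    a ⊞[Φ] b ⊞[Φ] c ⊞[Φ] d = a + b + c + d := by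
  have h0 := hJ.map_zero hΦ.2
  have ha₂ : a + a = p * (a + a) * p := by rw [mul_add, add_mul, ← ha]
  have hd₂ : d + d = q * (d + d) * q := by rw [mul_add, add_mul, ← hd]
  apply eq_of_jordanStar_eq_of_add_eq_one h.add_eq_one
  · simp only [jordanStar_pullbackAdd hΦ hJ, jordanStar_add_right,
      h.jordanStar_eq_add_self_of_mem₁₁ ha, h.jordanStar_eq_self_of_mem₁₂ hb,
      h.jordanStar_eq_self_of_mem₂₁ hc, h.jordanStar_eq_zero_of_mem₂₂ hd, pullbackAdd_zero hΦ h0,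
      add_zero]
    exact h.pullbackAdd_eq_add_of_mem₁₁_of_mem₁₂_of_mem₂₁ hΦ hJ hA hq0 ha₂ hb hc
  · simp only [jordanStar_pullbackAdd hΦ hJ, jordanStar_add_right,
      h.symm.jordanStar_eq_zero_of_mem₂₂ ha, h.symm.jordanStar_eq_self_of_mem₂₁ hb,
      h.symm.jordanStar_eq_self_of_mem₁₂ hc, h.symm.jordanStar_eq_add_self_of_mem₁₁ hd,
      zero_pullbackAdd hΦ h0, zero_add]
    rw [pullbackAdd_comm, pullbackAdd_comm Φ b, ← pullbackAdd_assoc hΦ.2,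
      h.symm.pullbackAdd_eq_add_of_mem₁₁_of_mem₁₂_of_mem₂₁ hΦ hJ hA hp0 hd₂ hc hb]
    abel

end IsPeircePair

end PreservesJordanStar

theorem stmt_17_general {A B : Type*}
    [Ring A] [Algebra ℂ A] [StarRing A]
    [Ring B] [StarRing B]
    (hAprime : ∀ a b : A, (∀ x : A, a * x * b = 0) → a = 0 ∨ b = 0)
    (p₁ p₂ : A) (hp₁0 : p₁ ≠ 0) (hp₁1 : p₁ ≠ 1) (hp₁sa : star p₁ = p₁)
    (hp₁idem : p₁ * p₁ = p₁) (hp₂ : p₂ = 1 - p₁)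
    (Φ : A → B) (hΦ : Function.Bijective Φ)
    (h : ∀ x y : A, Φ (x * y + y * star x) = Φ x * Φ y + Φ y * star (Φ x))
    (a₁₁ b₁₂ c₂₁ d₂₂ : A)
    (ha : a₁₁ = p₁ * a₁₁ * p₁) (hb : b₁₂ = p₁ * b₁₂ * p₂)
    (hc : c₂₁ = p₂ * c₂₁ * p₁) (hd : d₂₂ = p₂ * d₂₂ * p₂) :
    Φ (a₁₁ + b₁₂ + c₂₁ + d₂₂) = Φ a₁₁ + Φ b₁₂ + Φ c₂₁ + Φ d₂₂ := by
  have : IsAddTorsionFree A := .of_isTorsionFree ℂ A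
  have hpair : IsPeircePair p₁ p₂ := ⟨⟨hp₁idem, hp₁sa⟩, by rw [hp₂, add_sub_cancel]⟩
  have hp₂0 : p₂ ≠ 0 := by rwa [hp₂, sub_ne_zero, ne_comm]
  rw [← hpair.pullbackAdd_eq_add_of_mem₁₁_of_mem₁₂_of_mem₂₁_of_mem₂₂ hΦ h hAprime hp₁0 hp₂0
    ha hb hc hd, map_pullbackAdd hΦ.2, map_pullbackAdd hΦ.2, map_pullbackAdd hΦ.2]

/-- Claim 2.4: additivity on the full Peirce decomposition.
Membership a ∈ A_ij = pᵢ A pⱼ is expressed as a = pᵢ * a * pⱼ. -/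
theorem stmt_17 {A B : Type*}
    [Ring A] [Algebra ℂ A] [StarRing A] [StarModule ℂ A]
    [Ring B] [Algebra ℂ B] [StarRing B] [StarModule ℂ B]
    (hAprime : ∀ a b : A, (∀ x : A, a * x * b = 0) → a = 0 ∨ b = 0)
    (p₁ p₂ : A) (hp₁0 : p₁ ≠ 0) (hp₁1 : p₁ ≠ 1) (hp₁sa : star p₁ = p₁)
    (hp₁idem : p₁ * p₁ = p₁) (hp₂ : p₂ = 1 - p₁)
    (Φ : A → B) (hΦ : Function.Bijective Φ)
    (h : ∀ x y : A, Φ (x * y + y * star x) = Φ x * Φ y + Φ y * star (Φ x))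
    (a₁₁ b₁₂ c₂₁ d₂₂ : A)
    (ha : a₁₁ = p₁ * a₁₁ * p₁) (hb : b₁₂ = p₁ * b₁₂ * p₂)
    (hc : c₂₁ = p₂ * c₂₁ * p₁) (hd : d₂₂ = p₂ * d₂₂ * p₂) :
    Φ (a₁₁ + b₁₂ + c₂₁ + d₂₂) = Φ a₁₁ + Φ b₁₂ + Φ c₂₁ + Φ d₂₂ :=
  stmt_17_general hAprime p₁ p₂ hp₁0 hp₁1 hp₁sa hp₁idem hp₂ Φ hΦ h a₁₁ b₁₂ c₂₁ d₂₂ ha hb hc hd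
end

section
/- Let A be a unital prime complex *-algebra with a nontrivial projection p₁, set p₂ = 1 − p₁ and A_ij = p_i A p_j for i, j ∈ {1,2}, let B be a complex *-algebra, and let Φ : A → B be a bijective mapping satisfying Φ(xy + yx*) = Φ(x)Φ(y) + Φ(y)Φ(x)* for all x, y ∈ A. Then for arbitrary elements a₁₂, b₁₂ ∈ A₁₂ and c₂₁, d₂₁ ∈ A₂₁: (i) Φ(a₁₂ + b₁₂) = Φ(a₁₂) + Φ(b₁₂), and (ii) Φ(c₂₁ + d₂₁) = Φ(c₂₁) + Φ(d₂₁). -/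
/-!
Write `x ⋄ y = x y + y x*`, so that `Φ (x ⋄ y) = Φ x ⋄ Φ y`, and `q = 1 - p`. As `⋄` is
biadditive, `Φ s = Φ a + Φ b` gives `Φ (s ⋄ y) = Φ (a ⋄ y) + Φ (b ⋄ y)` and
`Φ (y ⋄ s) = Φ (y ⋄ a) + Φ (y ⋄ b)`. For `y = p, q, p - q` all but one term on the right is
`Φ 0 = 0`, so injectivity of `Φ` determines the Peirce components of `s`. This makes `Φ`
additive on `A₁₂ + A₂₁` and on `A₁₁ + (A₁₂ + A₂₁)` (the latter cancels a factor `2`).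
For `a, b ∈ A₁₂` one has `(p + b) ⋄ (a + q) = a b* + (a + b) + b*`; expanding `Φ` of both sides
with these partial additivities leaves `Φ (a + b) = Φ a + Φ b`. Part (ii) is part (i) for the
projection `q`.
-/

section

variable {A B : Type*} [Ring A] [StarRing A] [Ring B] [StarRing B]

def PreservesJordanStarProduct (Φ : A → B) : Prop :=
  ∀ x y : A, Φ (x * y + y * star x) = Φ x * Φ y + Φ y * star (Φ x)

namespace PreservesJordanStarProduct

variable {Φ : A → B}

theorem map_zero (h : PreservesJordanStarProduct Φ) (hΦ : Function.Surjective Φ) :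
    Φ 0 = 0 := by
  obtain ⟨x, hx⟩ := hΦ 0
  simpa [hx] using h x 0

theorem map_jordan_left (h : PreservesJordanStarProduct Φ) {s a b : A}
    (hs : Φ s = Φ a + Φ b) (y : A) :
    Φ (s * y + y * star s) = Φ (a * y + y * star a) + Φ (b * y + y * star b) := by
  rw [h, h, h, hs, star_add]
  noncomm_ring

theorem map_jordan_right (h : PreservesJordanStarProduct Φ) {s a b : A}
    (hs : Φ s = Φ a + Φ b) (y : A) :
    Φ (y * s + s * star y) = Φ (y * a + a * star y) + Φ (y * b + b * star y) := by
  rw [h, h, h, hs]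
  noncomm_ring

variable {p : A}

theorem map_add_offDiag (h : PreservesJordanStarProduct Φ) (hΦ : Function.Bijective Φ)
    (hp : IsStarProjection p) (x y : A) :
    Φ (p * x * (1 - p) + (1 - p) * y * p) = Φ (p * x * (1 - p)) + Φ ((1 - p) * y * p) := by
  have hpp := hp.isIdempotentElem
  have hps := hp.isSelfAdjoint.star_eq
  set z := p * x * (1 - p) with hz
  set v := (1 - p) * y * p with hv
  obtain ⟨hqz, hqv, hzp, hvp, hzq, hvq⟩ :
      (1 - p) * z + z * star (1 - p) = z ∧ (1 - p) * v + v * star (1 - p) = v ∧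
      z * p + p * star z = 0 ∧ v * p + p * star v = v + star v ∧
      z * (1 - p) + (1 - p) * star z = z + star z ∧ v * (1 - p) + (1 - p) * star v = 0 := by
    refine ⟨?_, ?_, ?_, ?_, ?_, ?_⟩ <;>
      noncomm_ring [hz, hv, star_add, star_neg, star_one, star_mul, hps, hpp.eq, hpp.mul_self_mul]
  obtain ⟨s, hs⟩ := hΦ.2 (Φ z + Φ v)
  have hs₁ : (1 - p) * s + s * star (1 - p) = s := hΦ.1 <| by
    rw [h.map_jordan_right hs, hqz, hqv, hs]
  have hs₂ : s * p + p * star s = v + star v := hΦ.1 <| by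
    rw [h.map_jordan_left hs, hzp, hvp, h.map_zero hΦ.2, zero_add]
  have hs₃ : s * (1 - p) + (1 - p) * star s = z + star z := hΦ.1 <| by
    rw [h.map_jordan_left hs, hzq, hvq, h.map_zero hΦ.2, add_zero]
  -- `s` is the sum of its four Peirce components, each read off from one of the `hsᵢ`.
  have : s = z + v := by
    linear_combination
      (norm := noncomm_ring [hz, hv, star_add, star_neg, star_one, star_mul, hps, hpp.eq,
        hpp.mul_self_mul])
      -(p * hs₁ * p) + p * hs₃ * (1 - p) + (1 - p) * hs₂ * p + (1 - p) * hs₁ * (1 - p)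
  rw [← hs, this]

theorem map_add_diag_offDiag [IsAddTorsionFree A] (h : PreservesJordanStarProduct Φ)
    (hΦ : Function.Bijective Φ) (hp : IsStarProjection p) (x y w : A) :
    Φ (p * x * p + (p * y * (1 - p) + (1 - p) * w * p))
      = Φ (p * x * p) + Φ (p * y * (1 - p) + (1 - p) * w * p) := by
  have hpp := hp.isIdempotentElem
  have hps := hp.isSelfAdjoint.star_eq
  set e := p * x * p with he
  set m := p * y * (1 - p) + (1 - p) * w * p with hm
  obtain ⟨hde, hdm, hqe, hqm⟩ :
      (p - (1 - p)) * e + e * star (p - (1 - p)) = e + e ∧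
      (p - (1 - p)) * m + m * star (p - (1 - p)) = 0 ∧
      (1 - p) * e + e * star (1 - p) = 0 ∧ (1 - p) * m + m * star (1 - p) = m := by
    refine ⟨?_, ?_, ?_, ?_⟩ <;>
      noncomm_ring [he, hm, star_add, star_neg, star_one, star_mul, hps, hpp.eq, hpp.mul_self_mul]
  obtain ⟨s, hs⟩ := hΦ.2 (Φ e + Φ m)
  have hs₁ : (p - (1 - p)) * s + s * star (p - (1 - p)) = e + e := hΦ.1 <| by
    rw [h.map_jordan_right hs, hde, hdm, h.map_zero hΦ.2, add_zero]
  have hs₂ : (1 - p) * s + s * star (1 - p) = m := hΦ.1 <| by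
    rw [h.map_jordan_right hs, hqe, hqm, h.map_zero hΦ.2, zero_add]
  have : s = e + m := by
    refine nsmul_right_injective two_ne_zero ?_
    linear_combination
      (norm := noncomm_ring [he, hm, star_add, star_neg, star_one, star_mul, hps, hpp.eq,
        hpp.mul_self_mul])
      p * hs₁ * p + 2 * (p * hs₂ * (1 - p)) + 2 * ((1 - p) * hs₂ * p)
        + (1 - p) * hs₂ * (1 - p)
  rw [← hs, this]

theorem map_add_corner [IsAddTorsionFree A] (h : PreservesJordanStarProduct Φ)
    (hΦ : Function.Bijective Φ) (hp : IsStarProjection p) (x y : A) :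
    Φ (p * x * (1 - p) + p * y * (1 - p)) = Φ (p * x * (1 - p)) + Φ (p * y * (1 - p)) := by
  have hpp := hp.isIdempotentElem
  have hps := hp.isSelfAdjoint.star_eq
  set a := p * x * (1 - p) with ha
  set b := p * y * (1 - p) with hb
  have hpb : Φ (p + b) = Φ p + Φ b := by
    simpa [hpp.eq] using h.map_add_diag_offDiag hΦ hp 1 y 0
  have haq : Φ (a + (1 - p)) = Φ a + Φ (1 - p) := by
    simpa [hp.one_sub.isIdempotentElem.eq, add_comm] using
      h.map_add_diag_offDiag hΦ hp.one_sub 1 0 x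
  obtain ⟨key, hpa, hpq, hba, hbq, hab⟩ :
      (p + b) * (a + (1 - p)) + (a + (1 - p)) * star (p + b)
        = p * (x * (1 - p) * star y) * p + (p * (x + y) * (1 - p) + (1 - p) * star y * p) ∧
      p * a + a * star p = a ∧
      p * (1 - p) + (1 - p) * star p = 0 ∧
      b * a + a * star b = p * (x * (1 - p) * star y) * p ∧
      b * (1 - p) + (1 - p) * star b = p * y * (1 - p) + (1 - p) * star y * p ∧
      p * (x + y) * (1 - p) = a + b := by
    refine ⟨?_, ?_, ?_, ?_, ?_, ?_⟩ <;>
      noncomm_ring [ha, hb, star_add, star_neg, star_one, star_mul, hps, hpp.eq, hpp.mul_self_mul]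
  have expand := h.map_jordan_left hpb (a + (1 - p))
  rw [key, h.map_jordan_right haq p, h.map_jordan_right haq b, hpa, hpq, hba, hbq,
    h.map_add_diag_offDiag hΦ hp, h.map_add_offDiag hΦ hp (x + y), hab,
    h.map_add_offDiag hΦ hp y, ← hb, h.map_zero hΦ.2] at expand
  linear_combination (norm := abel) expand

end PreservesJordanStarProduct

end

theorem stmt_18_general {A B : Type*}
    [Ring A] [Algebra ℂ A] [StarRing A]
    [Ring B] [StarRing B]
    (p₁ p₂ : A) (hp₁sa : star p₁ = p₁)
    (hp₁idem : p₁ * p₁ = p₁) (hp₂ : p₂ = 1 - p₁)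
    (Φ : A → B) (hΦ : Function.Bijective Φ)
    (h : ∀ x y : A, Φ (x * y + y * star x) = Φ x * Φ y + Φ y * star (Φ x))
    (a₁₂ b₁₂ c₂₁ d₂₁ : A)
    (ha : a₁₂ = p₁ * a₁₂ * p₂) (hb : b₁₂ = p₁ * b₁₂ * p₂)
    (hc : c₂₁ = p₂ * c₂₁ * p₁) (hd : d₂₁ = p₂ * d₂₁ * p₁) :
    Φ (a₁₂ + b₁₂) = Φ a₁₂ + Φ b₁₂ ∧
    Φ (c₂₁ + d₂₁) = Φ c₂₁ + Φ d₂₁ := by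
  have hp : IsStarProjection p₁ := ⟨hp₁idem, hp₁sa⟩
  have : IsAddTorsionFree A := .of_isTorsionFree ℂ A
  subst hp₂
  constructor
  · rw [ha, hb]
    exact PreservesJordanStarProduct.map_add_corner h hΦ hp a₁₂ b₁₂
  · rw [hc, hd]
    simpa only [sub_sub_cancel] using
      PreservesJordanStarProduct.map_add_corner h hΦ hp.one_sub c₂₁ d₂₁

/-- Claim 2.6: additivity within off-diagonal Peirce corners.
Membership a ∈ A_ij = pᵢ A pⱼ is expressed as a = pᵢ * a * pⱼ. -/
theorem stmt_18 {A B : Type*}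
    [Ring A] [Algebra ℂ A] [StarRing A] [StarModule ℂ A]
    [Ring B] [Algebra ℂ B] [StarRing B] [StarModule ℂ B]
    (hAprime : ∀ a b : A, (∀ x : A, a * x * b = 0) → a = 0 ∨ b = 0)
    (p₁ p₂ : A) (hp₁0 : p₁ ≠ 0) (hp₁1 : p₁ ≠ 1) (hp₁sa : star p₁ = p₁)
    (hp₁idem : p₁ * p₁ = p₁) (hp₂ : p₂ = 1 - p₁)
    (Φ : A → B) (hΦ : Function.Bijective Φ)
    (h : ∀ x y : A, Φ (x * y + y * star x) = Φ x * Φ y + Φ y * star (Φ x))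
    (a₁₂ b₁₂ c₂₁ d₂₁ : A)
    (ha : a₁₂ = p₁ * a₁₂ * p₂) (hb : b₁₂ = p₁ * b₁₂ * p₂)
    (hc : c₂₁ = p₂ * c₂₁ * p₁) (hd : d₂₁ = p₂ * d₂₁ * p₁) :
    Φ (a₁₂ + b₁₂) = Φ a₁₂ + Φ b₁₂ ∧
    Φ (c₂₁ + d₂₁) = Φ c₂₁ + Φ d₂₁ :=
  stmt_18_general p₁ p₂ hp₁sa hp₁idem hp₂ Φ hΦ h a₁₂ b₁₂ c₂₁ d₂₁ ha hb hc hd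
end
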